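/- arXiv:2102.08352 — 4 statements merged into one kernel-verified Lean document; each statement's English description precedes it below -/
import Mathlib

section
/- Let Z be a finite-dimensional real normed vector space, g : Z → ℝ ∪ {+∞} proper convex lower semicontinuous, and h a convex function differentiable at z_1, z_2 and on a neighborhood of the minimizer below, with Bregman distance D(u,v) = h(u) − h(v) − ⟨∇h(v), u − v⟩. Let α ∈ [0,1], u ∈ Z*, z_1, z_2 ∈ Z, and suppose z⁺ is a minimizer of z ↦ g(z) + ⟨u, z⟩ + α D(z, z_1) + (1−α) D(z, z_2), with h differentiable at z⁺. Then for every z ∈ dom g: g(z) − g(z⁺) + ⟨u, z − z⁺⟩ ≥ D(z, z⁺) + α (D(z⁺, z_1) − D(z, z_1)) + (1−α) (D(z⁺, z_2) − D(z, z_2)). -/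
open Set

/-!
Expanding the Bregman distances, the objective is `g + ℓ + h` up to an additive constant, where
`ℓ = u - α ∇h(z₁) - (1 - α) ∇h(z₂)` is linear. Since `g + ℓ` is convex and `h` is differentiable
at the minimizer `z⁺`, first-order optimality gives
`(g + ℓ)(z) - (g + ℓ)(z⁺) + ⟨∇h(z⁺), z - z⁺⟩ ≥ 0`, and expanding the Bregman distances again
shows that this is exactly the claimed three-point inequality.
-/

theorem ConvexOn.le_add_fderiv_of_isMinOn_add {E : Type*} [NormedAddCommGroup E]
    [NormedSpace ℝ E] {s : Set E} {φ h : E → ℝ} {h' : StrongDual ℝ E} {x y : E}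
    (hφ : ConvexOn ℝ s φ) (hh : HasFDerivAt h h' x) (hmin : IsMinOn (φ + h) s x)
    (hx : x ∈ s) (hy : y ∈ s) :
    φ x ≤ φ y + h' (y - x) := by
  -- By convexity, `ψ t - ψ 0 ≥ (φ + h)(x + t • (y - x)) - (φ + h) x` for `t ∈ [0, 1]`.
  set ψ : ℝ → ℝ := fun t => h (x + t • (y - x)) + t * (φ y - φ x)
  have hψ_min : IsMinOn ψ (Icc 0 1) 0 := by
    intro t ⟨ht₀, ht₁⟩
    have hseg : x + t • (y - x) = (1 - t) • x + t • y := by module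
    have hconv : φ (x + t • (y - x)) ≤ (1 - t) * φ x + t * φ y := by
      rw [hseg]
      exact hφ.2 hx hy (by linarith) ht₀ (by ring)
    have hle := hmin (hφ.1.add_smul_sub_mem hx hy ⟨ht₀, ht₁⟩)
    simp only [mem_ofPred_eq, Pi.add_apply, ψ, zero_smul, add_zero, zero_mul] at hle ⊢
    linarith
  have hψ_deriv : HasDerivAt ψ (h' (y - x) + (φ y - φ x)) 0 := by
    have hline : HasDerivAt (fun t : ℝ => x + t • (y - x)) (y - x) 0 := by
      simpa using ((hasDerivAt_id (0 : ℝ)).smul_const (y - x)).const_add x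
    have hh₀ : HasFDerivAt h h' (x + (0 : ℝ) • (y - x)) := by simpa using hh
    have := (hh₀.comp_hasDerivAt 0 hline).add ((hasDerivAt_id (0 : ℝ)).mul_const (φ y - φ x))
    rw [one_mul] at this
    exact this
  have hone : (1 : ℝ) ∈ posTangentConeAt (Icc 0 1) 0 := by
    simpa using sub_mem_posTangentConeAt_of_segment_subset (segment_eq_Icc zero_le_one).subset
  have hslope := hψ_min.localize.hasFDerivWithinAt_nonneg
    hψ_deriv.hasFDerivAt.hasFDerivWithinAt hone
  rw [ContinuousLinearMap.toSpanSingleton_apply, one_smul] at hslope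
  linarith

theorem stmt_4_general
    {E : Type*} [NormedAddCommGroup E] [NormedSpace ℝ E]
    (g : E → ℝ) (hg_cvx : ConvexOn ℝ Set.univ g)
    (h : E → ℝ)
    (hgrad : E → StrongDual ℝ E)
    (D : E → E → ℝ) (hD : ∀ u v, D u v = h u - h v - hgrad v (u - v))
    (α : ℝ)
    (u : StrongDual ℝ E) (z₁ z₂ zp : E)
    (hdiffp : HasFDerivAt h (hgrad zp) zp)
    (hmin : IsMinOn (fun z => g z + u z + α * D z z₁ + (1 - α) * D z z₂) Set.univ zp) :
    ∀ z : E,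
      g z - g zp + u (z - zp)
        ≥ D z zp + α * (D zp z₁ - D z z₁) + (1 - α) * (D zp z₂ - D z z₂) := by
  intro z
  set ℓ : StrongDual ℝ E := u - α • hgrad z₁ - (1 - α) • hgrad z₂
  have hconv : ConvexOn ℝ univ (fun w => g w + ℓ w) :=
    hg_cvx.add (ℓ.toLinearMap.convexOn convex_univ)
  have hmin' : IsMinOn ((fun w => g w + ℓ w) + h) univ zp := by
    intro w _
    have hw := hmin (mem_univ w)
    simp only [mem_ofPred_eq, Pi.add_apply, hD, ℓ, map_sub, sub_apply, smul_apply,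
      smul_eq_mul] at hw ⊢
    linarith
  have hopt := hconv.le_add_fderiv_of_isMinOn_add hdiffp hmin' (mem_univ zp) (mem_univ z)
  simp only [hD, ℓ, map_sub, sub_apply, smul_apply, smul_eq_mul] at hopt ⊢
  linarith

/-- **Bregman proximal inequality (three-point lemma).**
If `z⁺` minimizes `z ↦ g(z) + ⟨u, z⟩ + α D(z, z₁) + (1 - α) D(z, z₂)`, where
`D(u,v) = h(u) - h(v) - ⟨∇h(v), u - v⟩` is the Bregman distance of a convex function `h`
differentiable at `z₁`, `z₂` and `z⁺`, and `g` is convex lower semicontinuous, then for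
every `z`:
`g(z) - g(z⁺) + ⟨u, z - z⁺⟩ ≥ D(z, z⁺) + α (D(z⁺, z₁) - D(z, z₁)) + (1-α)(D(z⁺, z₂) - D(z, z₂))`. -/
theorem stmt_4
    {E : Type*} [NormedAddCommGroup E] [NormedSpace ℝ E] [FiniteDimensional ℝ E]
    (g : E → ℝ) (hg_cvx : ConvexOn ℝ Set.univ g) (hg_lsc : LowerSemicontinuous g)
    (h : E → ℝ) (hh_cvx : ConvexOn ℝ Set.univ h)
    (hgrad : E → StrongDual ℝ E)
    (D : E → E → ℝ) (hD : ∀ u v, D u v = h u - h v - hgrad v (u - v))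
    (α : ℝ) (hα : α ∈ Set.Icc (0 : ℝ) 1)
    (u : StrongDual ℝ E) (z₁ z₂ zp : E)
    (hdiff₁ : HasFDerivAt h (hgrad z₁) z₁)
    (hdiff₂ : HasFDerivAt h (hgrad z₂) z₂)
    (hdiffp : HasFDerivAt h (hgrad zp) zp)
    (hmin : IsMinOn (fun z => g z + u z + α * D z z₁ + (1 - α) * D z z₂) Set.univ zp) :
    ∀ z : E,
      g z - g zp + u (z - zp)
        ≥ D z zp + α * (D zp z₁ - D z z₁) + (1 - α) * (D zp z₂ - D z z₂) :=
  stmt_4_general g hg_cvx h hgrad D hD α u z₁ z₂ zp hdiffp hmin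
end

section
/- Let the Bregman setup, the monotone operator F with variable L-Lipschitz oracle, and the MP-VR iterates (z_k^s, z_{k+1/2}^s, w^s) with the quantities Θ_{k+1/2}^s(z), e(z,s,k), δ(s,k) be as in the context. Let α ∈ [0,1) and τ = γ√(1−α)/L for some γ ∈ (0,1). Then for every z ∈ dom g and every epoch s ≥ 0 (pathwise, for every realization of the random indices): Σ_{k=0}^{K−1} τ Θ_{k+1/2}^s(z) + α D(z, z_0^{s+1}) + (1−α) Σ_{j=1}^K D(z, z_j^s) ≤ α D(z, z_0^s) + (1−α) Σ_{j=1}^K D(z, z_j^{s−1}) + Σ_{k=0}^{K−1} [e(z, s, k) + δ(s, k)]. -/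
/-!
Both the half step and the full step of an MP-VR iteration minimize `g` plus a linear term plus
a nonnegative combination of Bregman distances whose weights add up to `1/τ`. First-order
optimality of such a minimizer `p` against the convex rest of the objective gives the three-point
inequality `Φ(p) + D(z, p)/τ ≤ Φ(z)`. Applying it at the half step (tested at the full step) and at
the full step (tested at `z`), and bounding `D(z⁺, z_{k+1/2})` and the anchor distances
`Σ_j D(z_{k+1/2}, z_j^{s-1})` from below by squared norms (the latter via Jensen, as `w^s` is the
average of the anchors), yields a one-step bound; the `α`-weighted distances then telescope over
the epoch.
-/

open MeasureTheory Finset Set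

section

variable {E : Type*} [NormedAddCommGroup E] [NormedSpace ℝ E]

theorem IsMinOn.add_mul_bregman_le {G h : E → ℝ} {h' : StrongDual ℝ E} {Λ : ℝ} {p : E}
    (hG : ConvexOn ℝ univ G) (hh : HasFDerivAt h h' p)
    (hp : IsMinOn (fun x => G x + Λ * h x) univ p) (z : E) :
    G p + Λ * h p + Λ * (h z - h p - h' (z - p)) ≤ G z + Λ * h z := by
  set φ : ℝ → ℝ := fun t => Λ * h (p + t • (z - p)) + t * (G z - G p)
  have hφ : HasDerivAt φ (Λ * h' (z - p) + 1 * (G z - G p)) 0 := by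
    have hline : HasDerivAt (fun t : ℝ => p + t • (z - p)) (z - p) 0 := by
      simpa using ((hasDerivAt_id (0 : ℝ)).smul_const (z - p)).const_add p
    have hh0 : HasFDerivAt h h' (p + (0 : ℝ) • (z - p)) := by simpa using hh
    exact ((hh0.comp_hasDerivAt 0 hline).const_mul Λ).add ((hasDerivAt_id 0).mul_const _)
  -- on the segment `G` lies below its chord, so `φ` is minimal at `0` on `[0, 1]`
  have hmin : IsMinOn φ (Icc 0 1) 0 := by
    intro t ⟨ht0, ht1⟩
    have hchord : G (p + t • (z - p)) ≤ (1 - t) * G p + t * G z := by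
      have hpt : p + t • (z - p) = (1 - t) • p + t • z := by
        rw [smul_sub, sub_smul, one_smul]; abel
      simpa only [hpt, smul_eq_mul] using
        hG.2 (mem_univ p) (mem_univ z) (by linarith : 0 ≤ 1 - t) ht0 (by ring)
    have := hp (mem_univ (p + t • (z - p)))
    simp only [mem_ofPred_eq, φ, zero_smul, add_zero, zero_mul] at this ⊢
    linarith
  have hcone : (1 : ℝ) ∈ posTangentConeAt (Icc 0 1) 0 :=
    mem_posTangentConeAt_of_segment_subset (by simp [segment_eq_Icc])
  have := hmin.localize.hasFDerivWithinAt_nonneg hφ.hasFDerivAt.hasFDerivWithinAt hcone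
  simp only [ContinuousLinearMap.toSpanSingleton_apply, one_smul, one_mul] at this
  linarith

def bregmanProxObjective (g : E → ℝ) (D : E → E → ℝ) (ζ : StrongDual ℝ E) (a : ℝ) (c : E)
    (b : ℝ) (m : ℕ → E) (K : ℕ) (x : E) : ℝ :=
  g x + ζ x + a * D x c + b * ∑ j ∈ Icc 1 K, D x (m j)

variable {g h : E → ℝ} {hgrad : E → StrongDual ℝ E} {D : E → E → ℝ}

theorem bregmanProxObjective_eq (hD : ∀ u v, D u v = h u - h v - hgrad v (u - v))
    (ζ : StrongDual ℝ E) (a : ℝ) (c : E) (b : ℝ) (m : ℕ → E) (K : ℕ) (x : E) :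
    bregmanProxObjective g D ζ a c b m K x =
      g x + (ζ - a • hgrad c - b • ∑ j ∈ Icc 1 K, hgrad (m j)) x
        + (a * (hgrad c c - h c) + b * ∑ j ∈ Icc 1 K, (hgrad (m j) (m j) - h (m j)))
        + (a + b * K) * h x := by
  simp only [bregmanProxObjective, hD, map_sub, sub_apply, smul_apply, _root_.sum_apply,
    smul_eq_mul, sum_sub_distrib, sum_const, Nat.card_Icc, nsmul_eq_mul]
  push_cast
  ring

theorem bregmanProxObjective_add_le (hg : ConvexOn ℝ univ g)
    (hD : ∀ u v, D u v = h u - h v - hgrad v (u - v)) {ζ : StrongDual ℝ E} {a b : ℝ} {c : E}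
    {m : ℕ → E} {K : ℕ} {p : E} (hdiff : HasFDerivAt h (hgrad p) p)
    (hp : IsMinOn (bregmanProxObjective g D ζ a c b m K) univ p) (z : E) :
    bregmanProxObjective g D ζ a c b m K p + (a + b * K) * D z p
      ≤ bregmanProxObjective g D ζ a c b m K z := by
  set ℓ := ζ - a • hgrad c - b • ∑ j ∈ Icc 1 K, hgrad (m j)
  set C := a * (hgrad c c - h c) + b * ∑ j ∈ Icc 1 K, (hgrad (m j) (m j) - h (m j))
  have hG : ConvexOn ℝ univ (fun x => g x + ℓ x + C) :=
    (hg.add (ℓ.toLinearMap.convexOn convex_univ)).add_const C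
  have hobj := funext (bregmanProxObjective_eq (g := g) hD ζ a c b m K)
  rw [hobj] at hp ⊢
  have := hp.add_mul_bregman_le hG hdiff z
  rw [hD z p]
  linarith

theorem bregmanProxObjective_smul {τ : ℝ} (ζ : StrongDual ℝ E) (a : ℝ) (c : E) (b : ℝ)
    (m : ℕ → E) (K : ℕ) (x : E) :
    bregmanProxObjective (fun y => τ * g y) D (τ • ζ) (τ * a) c (τ * b) m K x
      = τ * bregmanProxObjective g D ζ a c b m K x := by
  simp only [bregmanProxObjective, smul_apply, smul_eq_mul]
  ring

theorem sq_norm_sub_average_le {ι : Type*} {s : Finset ι} (hs : s.Nonempty) (x : E) (m : ι → E) :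
    ‖x - (#s : ℝ)⁻¹ • ∑ i ∈ s, m i‖ ^ 2 ≤ (#s : ℝ)⁻¹ * ∑ i ∈ s, ‖x - m i‖ ^ 2 := by
  have hcard : (#s : ℝ) ≠ 0 := by simp [hs.ne_empty]
  have hx : x - (#s : ℝ)⁻¹ • ∑ i ∈ s, m i = ∑ i ∈ s, (#s : ℝ)⁻¹ • (x - m i) := by
    rw [← smul_sum, sum_sub_distrib, sum_const, ← Nat.cast_smul_eq_nsmul ℝ, smul_sub,
      smul_smul, inv_mul_cancel₀ hcard, one_smul]
  have hjensen := ((convexOn_norm convex_univ).pow (fun x _ => norm_nonneg x) 2).map_sum_le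
    (t := s) (w := fun _ => (#s : ℝ)⁻¹) (p := fun i => x - m i) (fun _ _ => by positivity)
    (by simp [sum_const, nsmul_eq_mul, hcard]) (fun _ _ => mem_univ _)
  simpa [hx, mul_sum] using hjensen

theorem mirrorProx_step_le (hg : ConvexOn ℝ univ g) (hdiff : ∀ x, HasFDerivAt h (hgrad x) x)
    (hD : ∀ u v, D u v = h u - h v - hgrad v (u - v))
    (hD_lower : ∀ u v, ‖u - v‖ ^ 2 / 2 ≤ D u v) {α τ : ℝ} (hα : α ∈ Ico (0 : ℝ) 1)
    (hτ : 0 < τ) {K : ℕ} (hK : 0 < K) {F Fξ : E → StrongDual ℝ E} {c w zh z' : E}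
    {m : ℕ → E} (hw : w = (K : ℝ)⁻¹ • ∑ j ∈ Icc 1 K, m j)
    (hzh : IsMinOn (bregmanProxObjective g D (F w) (α / τ) c ((1 - α) / (τ * K)) m K) univ zh)
    (hz' : IsMinOn (bregmanProxObjective g D (F w + Fξ zh - Fξ w) (α / τ) c
      ((1 - α) / (τ * K)) m K) univ z')
    (z : E) :
    τ * (F zh (zh - z) + g zh - g z) + D z z'
      ≤ α * D z c + (1 - α) / K * ∑ j ∈ Icc 1 K, D z (m j)
        + τ * ((F zh - Fξ zh - F w + Fξ w) (zh - z))
        + (τ * ((Fξ w - Fξ zh) (z' - zh)) - ‖z' - zh‖ ^ 2 / 2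
          - (1 - α) / 2 * ‖zh - w‖ ^ 2) := by
  obtain ⟨hα0, hα1⟩ := hα
  have hK' : (K : ℝ) ≠ 0 := by positivity
  -- multiplying the prox objectives by `τ` makes the total Bregman weight equal to `1`
  have hscale : ∀ ζ p, IsMinOn (bregmanProxObjective g D ζ (α / τ) c ((1 - α) / (τ * K)) m K)
      univ p → IsMinOn (bregmanProxObjective (fun y => τ * g y) D (τ • ζ) α c
        ((1 - α) / K) m K) univ p := by
    intro ζ p hp x _
    have hb : τ * ((1 - α) / (τ * K)) = (1 - α) / K := by field_simp
    have hΦ : ∀ y, bregmanProxObjective (fun y => τ * g y) D (τ • ζ) α c ((1 - α) / K) m K y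
        = τ * bregmanProxObjective g D ζ (α / τ) c ((1 - α) / (τ * K)) m K y := fun y => by
      rw [← bregmanProxObjective_smul, mul_div_cancel₀ _ hτ.ne', hb]
    simp only [mem_ofPred_eq, hΦ]
    exact mul_le_mul_of_nonneg_left (hp (mem_univ x)) hτ.le
  have hg' : ConvexOn ℝ univ (fun y => τ * g y) := hg.smul hτ.le
  have hweight : α + (1 - α) / K * K = 1 := by field_simp; ring
  have hhalf := bregmanProxObjective_add_le hg' hD (hdiff zh) (hscale _ _ hzh) z'
  have hfull := bregmanProxObjective_add_le hg' hD (hdiff z') (hscale _ _ hz') z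
  rw [hweight, one_mul] at hhalf hfull
  have hsep : ‖z' - zh‖ ^ 2 / 2 ≤ D z' zh := hD_lower z' zh
  have hcenter : 0 ≤ α * D zh c :=
    mul_nonneg hα0 ((by positivity : (0 : ℝ) ≤ ‖zh - c‖ ^ 2 / 2).trans (hD_lower zh c))
  have hanchors : (1 - α) / 2 * ‖zh - w‖ ^ 2 ≤ (1 - α) / K * ∑ j ∈ Icc 1 K, D zh (m j) := by
    have hjensen := sq_norm_sub_average_le (nonempty_Icc.2 hK) zh m
    rw [Nat.card_Icc, add_tsub_cancel_right, ← hw] at hjensen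
    calc (1 - α) / 2 * ‖zh - w‖ ^ 2
        ≤ (1 - α) / 2 * ((K : ℝ)⁻¹ * ∑ j ∈ Icc 1 K, ‖zh - m j‖ ^ 2) := by gcongr
      _ = (1 - α) / K * ∑ j ∈ Icc 1 K, ‖zh - m j‖ ^ 2 / 2 := by
        rw [← sum_div]; field_simp
      _ ≤ (1 - α) / K * ∑ j ∈ Icc 1 K, D zh (m j) := by
        gcongr with j
        exact hD_lower zh (m j)
  simp only [bregmanProxObjective, smul_apply, add_apply, sub_apply, map_sub, smul_eq_mul]
    at hhalf hfull ⊢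
  linarith

end

theorem sum_add_mul_le_of_forall_add_succ_le {K : ℕ} {α : ℝ} {u a v : ℕ → ℝ}
    (hstep : ∀ k < K, u k + a (k + 1) ≤ α * a k + v k) :
    ∑ k ∈ range K, u k + α * a K + (1 - α) * ∑ j ∈ Icc 1 K, a j
      ≤ α * a 0 + ∑ k ∈ range K, v k := by
  have hsum := sum_le_sum fun k hk => hstep k (mem_range.1 hk)
  have htel := sum_range_sub a K
  have hshift : ∑ j ∈ Icc 1 K, a j = ∑ k ∈ range K, a (k + 1) := by
    rw [← Finset.Ico_add_one_right_eq_Icc, sum_Ico_eq_sum_range, add_tsub_cancel_right]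
    simp only [add_comm 1]
  simp only [sum_add_distrib, sum_sub_distrib, ← mul_sum] at hsum htel
  rw [hshift]
  linear_combination hsum - α * htel

theorem stmt_5_general
    {E : Type*} [NormedAddCommGroup E] [NormedSpace ℝ E]
    {Ξ : Type*}
    -- proper convex lsc g and the Bregman structure
    (g : E → ℝ) (hg_cvx : ConvexOn ℝ Set.univ g)
    (h : E → ℝ)
    (hgrad : E → StrongDual ℝ E)
    (hdiff : ∀ x : E, HasFDerivAt h (hgrad x) x)
    (D : E → E → ℝ) (hD : ∀ u v, D u v = h u - h v - hgrad v (u - v))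
    (hD_lower : ∀ u v : E, ‖u - v‖ ^ 2 / 2 ≤ D u v)  -- 1-strong convexity of h
    -- monotone operator with a variable L-Lipschitz-in-mean unbiased oracle
    (F : E → StrongDual ℝ E)
    (Fo : Ξ → E → StrongDual ℝ E)
    (L : ℝ) (hL : 0 < L)
    -- parameters
    (α γ τ : ℝ) (hα : α ∈ Set.Ico (0 : ℝ) 1) (hγ : γ ∈ Set.Ioo (0 : ℝ) 1)
    (hτ : τ = γ * Real.sqrt (1 - α) / L)
    (K : ℕ) (hK : 0 < K)
    -- the MP-VR iterates along a realization `ξs` of the random indices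
    (z0 : E) (ξs : ℕ → ℕ → Ξ)
    (zz zhalf zm : ℕ → ℕ → E) (w : ℕ → E)
    (hzm0 : ∀ j, zm 0 j = z0)
    (hzm_succ : ∀ s j, zm (s + 1) j = zz s j)
    (hw0 : w 0 = z0)
    (hw_succ : ∀ s, w (s + 1) = (K : ℝ)⁻¹ • ∑ k ∈ Finset.Icc 1 K, zz s k)
    (hz0_succ : ∀ s, zz (s + 1) 0 = zz s K)
    (hhalf : ∀ s, ∀ k < K,
      IsMinOn (fun zv => g zv + F (w s) zv + (α / τ) * D zv (zz s k)
          + ((1 - α) / (τ * K)) * ∑ j ∈ Finset.Icc 1 K, D zv (zm s j))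
        Set.univ (zhalf s k))
    (hfull : ∀ s, ∀ k < K,
      IsMinOn (fun zv => g zv
          + (F (w s) + Fo (ξs s k) (zhalf s k) - Fo (ξs s k) (w s)) zv
          + (α / τ) * D zv (zz s k)
          + ((1 - α) / (τ * K)) * ∑ j ∈ Finset.Icc 1 K, D zv (zm s j))
        Set.univ (zz s (k + 1)))
    -- the quantities appearing in the estimate
    (Θ : ℕ → ℕ → E → ℝ)
    (hΘ : ∀ s k zv, Θ s k zv
      = F (zhalf s k) (zhalf s k - zv) + g (zhalf s k) - g zv)
    (e : E → ℕ → ℕ → ℝ)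
    (he : ∀ zv s k, e zv s k
      = τ * ((F (zhalf s k) - Fo (ξs s k) (zhalf s k)
          - F (w s) + Fo (ξs s k) (w s)) (zhalf s k - zv)))
    (δ : ℕ → ℕ → ℝ)
    (hδ : ∀ s k, δ s k
      = τ * ((Fo (ξs s k) (w s) - Fo (ξs s k) (zhalf s k)) (zz s (k + 1) - zhalf s k))
        - ‖zz s (k + 1) - zhalf s k‖ ^ 2 / 2
        - ((1 - α) / 2) * ‖zhalf s k - w s‖ ^ 2) :
    ∀ (zv : E) (s : ℕ),
      (∑ k ∈ Finset.range K, τ * Θ s k zv)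
          + α * D zv (zz (s + 1) 0)
          + (1 - α) * ∑ j ∈ Finset.Icc 1 K, D zv (zz s j)
        ≤ α * D zv (zz s 0)
          + (1 - α) * ∑ j ∈ Finset.Icc 1 K, D zv (zm s j)
          + ∑ k ∈ Finset.range K, (e zv s k + δ s k) := by
  intro z s
  have hτ0 : 0 < τ := hτ ▸ div_pos (mul_pos hγ.1 (Real.sqrt_pos.2 (sub_pos.2 hα.2))) hL
  have hw : w s = (K : ℝ)⁻¹ • ∑ j ∈ Icc 1 K, zm s j := by
    cases s with
    | zero =>
      have hK' : (K : ℝ) ≠ 0 := by positivity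
      simp [hw0, hzm0, ← Nat.cast_smul_eq_nsmul ℝ, smul_smul, hK']
    | succ s => simp only [hw_succ, hzm_succ]
  have hstep : ∀ k < K, τ * Θ s k z + D z (zz s (k + 1))
      ≤ α * D z (zz s k) + ((1 - α) / K * ∑ j ∈ Icc 1 K, D z (zm s j) + (e z s k + δ s k)) := by
    intro k hk
    rw [hΘ, he, hδ, ← add_assoc, ← add_assoc]
    exact mirrorProx_step_le hg_cvx hdiff hD hD_lower hα hτ0 hK hw (hhalf s k hk) (hfull s k hk) z
  have hsum := sum_add_mul_le_of_forall_add_succ_le (a := fun k => D z (zz s k)) hstep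
  have hK' : (K : ℝ) * ((1 - α) / K) = 1 - α := by field_simp
  simp only [sum_add_distrib, sum_const, card_range, nsmul_eq_mul, ← mul_assoc, hK'] at hsum
  rw [hz0_succ, sum_add_distrib]
  linarith

/-- **Per-epoch pathwise estimate for Mirror-Prox with variance reduction (Bregman setup),
part (i) of the key lemma.**  For any point `z`, any epoch `s`, and any realization of the
random indices, the iterates of MP-VR satisfy
`Σ_{k<K} τ Θ_{k+1/2}^s(z) + α D(z, z_0^{s+1}) + (1-α) Σ_{j=1}^K D(z, z_j^s)
  ≤ α D(z, z_0^s) + (1-α) Σ_{j=1}^K D(z, z_j^{s-1}) + Σ_{k<K} [e(z,s,k) + δ(s,k)]`. -/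
theorem stmt_5
    {E : Type*} [NormedAddCommGroup E] [NormedSpace ℝ E] [FiniteDimensional ℝ E]
    {Ξ : Type*} [MeasurableSpace Ξ]
    -- proper convex lsc g and the Bregman structure
    (g : E → ℝ) (hg_cvx : ConvexOn ℝ Set.univ g) (hg_lsc : LowerSemicontinuous g)
    (h : E → ℝ) (hh_cvx : ConvexOn ℝ Set.univ h)
    (hgrad : E → StrongDual ℝ E)
    (hdiff : ∀ x : E, HasFDerivAt h (hgrad x) x)
    (D : E → E → ℝ) (hD : ∀ u v, D u v = h u - h v - hgrad v (u - v))
    (hD_lower : ∀ u v : E, ‖u - v‖ ^ 2 / 2 ≤ D u v)  -- 1-strong convexity of h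
    -- monotone operator with a variable L-Lipschitz-in-mean unbiased oracle
    (F : E → StrongDual ℝ E) (hF_mono : ∀ u v : E, 0 ≤ (F u - F v) (u - v))
    (Fo : Ξ → E → StrongDual ℝ E)
    (Qd : E → E → Measure Ξ) (hQd_prob : ∀ u v, IsProbabilityMeasure (Qd u v))
    (L : ℝ) (hL : 0 < L)
    (h_unbiased : ∀ u v z : E, ∫ ξ, Fo ξ z ∂(Qd u v) = F z)
    (h_lip : ∀ u v : E, ∫ ξ, ‖Fo ξ u - Fo ξ v‖ ^ 2 ∂(Qd u v) ≤ L ^ 2 * ‖u - v‖ ^ 2)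
    -- parameters
    (α γ τ : ℝ) (hα : α ∈ Set.Ico (0 : ℝ) 1) (hγ : γ ∈ Set.Ioo (0 : ℝ) 1)
    (hτ : τ = γ * Real.sqrt (1 - α) / L)
    (K : ℕ) (hK : 0 < K)
    -- the MP-VR iterates along a realization `ξs` of the random indices
    (z0 : E) (ξs : ℕ → ℕ → Ξ)
    (zz zhalf zm : ℕ → ℕ → E) (w : ℕ → E)
    (hzz0 : zz 0 0 = z0) (hzm0 : ∀ j, zm 0 j = z0)
    (hzm_succ : ∀ s j, zm (s + 1) j = zz s j)
    (hw0 : w 0 = z0)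
    (hw_succ : ∀ s, w (s + 1) = (K : ℝ)⁻¹ • ∑ k ∈ Finset.Icc 1 K, zz s k)
    (hz0_succ : ∀ s, zz (s + 1) 0 = zz s K)
    (hhalf : ∀ s, ∀ k < K,
      IsMinOn (fun zv => g zv + F (w s) zv + (α / τ) * D zv (zz s k)
          + ((1 - α) / (τ * K)) * ∑ j ∈ Finset.Icc 1 K, D zv (zm s j))
        Set.univ (zhalf s k))
    (hfull : ∀ s, ∀ k < K,
      IsMinOn (fun zv => g zv
          + (F (w s) + Fo (ξs s k) (zhalf s k) - Fo (ξs s k) (w s)) zv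
          + (α / τ) * D zv (zz s k)
          + ((1 - α) / (τ * K)) * ∑ j ∈ Finset.Icc 1 K, D zv (zm s j))
        Set.univ (zz s (k + 1)))
    -- the quantities appearing in the estimate
    (Θ : ℕ → ℕ → E → ℝ)
    (hΘ : ∀ s k zv, Θ s k zv
      = F (zhalf s k) (zhalf s k - zv) + g (zhalf s k) - g zv)
    (e : E → ℕ → ℕ → ℝ)
    (he : ∀ zv s k, e zv s k
      = τ * ((F (zhalf s k) - Fo (ξs s k) (zhalf s k)
          - F (w s) + Fo (ξs s k) (w s)) (zhalf s k - zv)))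
    (δ : ℕ → ℕ → ℝ)
    (hδ : ∀ s k, δ s k
      = τ * ((Fo (ξs s k) (w s) - Fo (ξs s k) (zhalf s k)) (zz s (k + 1) - zhalf s k))
        - ‖zz s (k + 1) - zhalf s k‖ ^ 2 / 2
        - ((1 - α) / 2) * ‖zhalf s k - w s‖ ^ 2) :
    ∀ (zv : E) (s : ℕ),
      (∑ k ∈ Finset.range K, τ * Θ s k zv)
          + α * D zv (zz (s + 1) 0)
          + (1 - α) * ∑ j ∈ Finset.Icc 1 K, D zv (zz s j)
        ≤ α * D zv (zz s 0)
          + (1 - α) * ∑ j ∈ Finset.Icc 1 K, D zv (zm s j)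
          + ∑ k ∈ Finset.range K, (e zv s k + δ s k) :=
  stmt_5_general g hg_cvx h hgrad hdiff D hD hD_lower F Fo L hL α γ τ hα hγ hτ K hK z0 ξs zz zhalf
    zm w hzm0 hzm_succ hw0 hw_succ hz0_succ hhalf hfull Θ hΘ e he δ hδ
end

section
/- Let A ∈ ℝ^{m×n} be a matrix with every row and every column nonzero, and let ‖A‖_Frob = √(Σ_{i,j} A_{ij}²). Define r_i = ‖A_{i:}‖₂²/‖A‖_Frob² for i ∈ [m] and c_j = ‖A_{:j}‖₂²/‖A‖_Frob² for j ∈ [n], and for z = (x, y) ∈ ℝⁿ × ℝᵐ and (i,j) ∈ [m] × [n] define F_{(i,j)}(z) = ((1/r_i) A_{i:} y_i, −(1/c_j) A_{:j} x_j) ∈ ℝⁿ × ℝᵐ, where A_{i:} ∈ ℝⁿ is the i-th row and A_{:j} ∈ ℝᵐ is the j-th column of A. Then for every z = (x,y): Σ_{i=1}^m Σ_{j=1}^n r_i c_j ‖F_{(i,j)}(z)‖₂² = ‖A‖_Frob² ‖z‖₂², where ‖z‖₂² = ‖x‖₂² + ‖y‖₂². In other words, the importance-sampling oracle ξ = (i,j)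 with Pr{ξ = (i,j)} = r_i c_j satisfies E‖F_ξ(z)‖₂² = ‖A‖_Frob² ‖z‖₂². -/
/-!
With `R i`, `C j` the squared row and column norms and `S = ‖A‖_F²`, the first block of
`F_{(i,j)}(z)` has squared norm `R i * y i ^ 2 / r i ^ 2`; since `R i / r i = S`, the weight
`r i * c j` turns it into `S * c j * y i ^ 2`, and symmetrically the second block gives
`S * r i * x j ^ 2`. Summing over `(i, j)` leaves the marginals, with `S * ∑ i, r i = S * ∑ j, c j = S`.
-/

open Finset

variable {ι κ : Type*} [Fintype ι] [Fintype κ]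

lemma sum_sq_ne_zero {v : ι → ℝ} (h : ∃ i, v i ≠ 0) : ∑ i, v i ^ 2 ≠ 0 := by
  obtain ⟨i, hi⟩ := h
  simp_rw [sq]
  exact fun h0 => hi ((sum_mul_self_eq_zero_iff _ _).mp h0 i (mem_univ i))

-- `S = 0` is allowed: both sides then vanish since `x / 0 = 0`.
lemma mul_sum_div_eq_self {f : ι → ℝ} {S : ℝ} (hS : S = ∑ i, f i) : S * ∑ i, f i / S = S := by
  rcases eq_or_ne S 0 with h | h
  · simp [h]
  · rw [← sum_div, ← hS, div_self h, mul_one]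

lemma importance_weight_mul_sum_sq {S p q a b : ℝ} {u : κ → ℝ} {w : ι → ℝ}
    (hu : ∑ l, u l ^ 2 ≠ 0) (hw : ∑ l, w l ^ 2 ≠ 0)
    (hp : p = (∑ l, u l ^ 2) / S) (hq : q = (∑ l, w l ^ 2) / S) :
    p * q * ((∑ l, (p⁻¹ * u l * b) ^ 2) + (∑ l, (q⁻¹ * w l * a) ^ 2))
      = S * (q * b ^ 2) + S * (p * a ^ 2) := by
  simp_rw [mul_pow, ← sum_mul, ← mul_sum]
  subst hp hq
  rcases eq_or_ne S 0 with hS | hS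
  · simp [hS]
  · field_simp

/-- **Importance sampling oracle for bilinear problems (Euclidean setup).**
For a matrix `A` with nonzero rows and columns, the importance-sampling stochastic
oracle `F_{(i,j)}(z) = ((1/r_i) A_{i:} y_i, -(1/c_j) A_{:j} x_j)` with
`Pr{ξ = (i,j)} = r_i c_j`, `r_i = ‖A_{i:}‖₂²/‖A‖_F²`, `c_j = ‖A_{:j}‖₂²/‖A‖_F²`,
satisfies `E‖F_ξ(z)‖₂² = ‖A‖_F² ‖z‖₂²`. -/
theorem stmt_13 (m n : ℕ) (A : Matrix (Fin m) (Fin n) ℝ)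
    (hrow : ∀ i, ∃ j, A i j ≠ 0) (hcol : ∀ j, ∃ i, A i j ≠ 0)
    (frob2 : ℝ) (hfrob2 : frob2 = ∑ i, ∑ j, (A i j) ^ 2)
    (r : Fin m → ℝ) (c : Fin n → ℝ)
    (hr : ∀ i, r i = (∑ j, (A i j) ^ 2) / frob2)
    (hc : ∀ j, c j = (∑ i, (A i j) ^ 2) / frob2)
    (x : Fin n → ℝ) (y : Fin m → ℝ) :
    ∑ i, ∑ j, (r i * c j) *
        ((∑ l, ((r i)⁻¹ * A i l * y i) ^ 2) + (∑ l, ((c j)⁻¹ * A l j * x j) ^ 2))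
      = frob2 * ((∑ j, (x j) ^ 2) + (∑ i, (y i) ^ 2)) := by
  have hterm i j : (r i * c j) *
      ((∑ l, ((r i)⁻¹ * A i l * y i) ^ 2) + (∑ l, ((c j)⁻¹ * A l j * x j) ^ 2))
        = frob2 * (c j * y i ^ 2) + frob2 * (r i * x j ^ 2) :=
    importance_weight_mul_sum_sq (sum_sq_ne_zero (hrow i)) (sum_sq_ne_zero (hcol j)) (hr i) (hc j)
  have hrsum : frob2 * ∑ i, r i = frob2 := by
    simp only [hr]
    exact mul_sum_div_eq_self hfrob2
  have hcsum : frob2 * ∑ j, c j = frob2 := by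
    simp only [hc]
    exact mul_sum_div_eq_self (hfrob2.trans sum_comm)
  simp only [hterm, sum_add_distrib, ← mul_sum, ← sum_mul, ← mul_assoc]
  rw [hrsum, hcsum]
  ring
end

section
/- Let A ∈ ℝ^{m×n} and let ‖A‖_max = max_{i,j} |A_{ij}|. Let u = (u^x, u^y), v = (v^x, v^y) ∈ ℝⁿ × ℝᵐ with u^x ≠ v^x and u^y ≠ v^y. Define the sampling-from-the-difference distribution Pr{ξ = (i,j)} = r_i c_j with r_i = |u^y_i − v^y_i| / ‖u^y − v^y‖₁ and c_j = |u^x_j − v^x_j| / ‖u^x − v^x‖₁, and for z = (x,y) and indices (i,j) with r_i > 0, c_j > 0 define F_{(i,j)}(z) = ((1/r_i) A_{i:} y_i, −(1/c_j) A_{:j} x_j). Then E_{ξ∼Q(u,v)} ‖F_ξ(u) − F_ξ(v)‖_*² = Σ_{i : r_i>0} (1/r_i) ‖A_{i:}‖_∞² |u^y_i − v^y_i|² + Σ_{j : c_j>0} (1/c_j) ‖A_{:j}‖_∞² |u^x_j − v^x_j|² ≤ ‖A‖_max² (‖u^x − v^x‖₁² + ‖u^y − v^y‖₁²) = ‖A‖_max²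 ‖u − v‖², where ‖(a, b)‖_*² = ‖a‖_∞² + ‖b‖_∞² and ‖(x, y)‖² = ‖x‖₁² + ‖y‖₁². -/
open Finset

/-!
Sampling `(i, j)` with probability `r i * c j` and reweighting by `1 / r i`, `1 / c j` makes each
coordinate of the estimator contribute `‖A_{i:}‖_∞² |Δy_i|² / r_i` in expectation (the factor `r_i`
of the distribution cancels one inverse weight; the other marginal sums to one). Since `r_i` is
proportional to `|Δy_i|`, this is `‖Δy‖₁ ‖A_{i:}‖_∞² |Δy_i| ≤ ‖A‖_max² ‖Δy‖₁ |Δy_i|`, and summing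
over `i` gives `‖A‖_max² ‖Δy‖₁²`; likewise for the columns.
-/

lemma sum_sum_mul_mul_add {ι κ R : Type*} [Fintype ι] [Fintype κ] [CommSemiring R]
    (r : ι → R) (c : κ → R) (f : ι → R) (g : κ → R) (hr : ∑ i, r i = 1) (hc : ∑ j, c j = 1) :
    ∑ i, ∑ j, r i * c j * (f i + g j) = ∑ i, r i * f i + ∑ j, c j * g j := by
  have h : ∀ i j, r i * c j * (f i + g j) = r i * f i * c j + r i * (c j * g j) :=
    fun i j => by ring
  simp only [h, sum_add_distrib, ← mul_sum, ← sum_mul, hc, hr, mul_one, one_mul]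

lemma iSup_abs_mul_mul {ι : Sort*} (a b : ℝ) (f : ι → ℝ) :
    ⨆ l, |a * f l * b| = |a| * |b| * ⨆ l, |f l| := by
  rw [Real.mul_iSup_of_nonneg (by positivity)]
  congr 1 with l
  rw [abs_mul, abs_mul]
  ring

lemma mul_inv_mul_sq {K : Type*} [Field K] (r y : K) : r * (r⁻¹ * y) ^ 2 = r⁻¹ * y ^ 2 := by
  rcases eq_or_ne r 0 with rfl | hr
  · simp
  · field_simp

lemma mul_iSup_abs_inv_mul_mul_sq {ι : Sort*} {r : ℝ} (hr : 0 ≤ r) (a : ι → ℝ) (x : ℝ) :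
    r * (⨆ l, |r⁻¹ * a l * x|) ^ 2 = r⁻¹ * (⨆ l, |a l|) ^ 2 * |x| ^ 2 := by
  rw [iSup_abs_mul_mul, abs_of_nonneg (inv_nonneg.mpr hr),
    show r⁻¹ * |x| * ⨆ l, |a l| = r⁻¹ * (|x| * ⨆ l, |a l|) by ring, mul_inv_mul_sq]
  ring

lemma sum_abs_div_sum_abs {ι : Type*} [Fintype ι] {d : ι → ℝ} (hd : d ≠ 0) :
    ∑ i, |d i| / ∑ k, |d k| = 1 := by
  rw [← sum_div, div_self]
  obtain ⟨i, hi⟩ := Function.ne_iff.mp hd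
  exact (sum_pos' (fun k _ => abs_nonneg (d k)) ⟨i, mem_univ i, abs_pos.mpr hi⟩).ne'

lemma sum_filter_pos_eq_sum {ι : Type*} [Fintype ι] {r f : ι → ℝ} (hr : ∀ i, 0 ≤ r i)
    (hf : ∀ i, r i = 0 → f i = 0) : ∑ i with 0 < r i, f i = ∑ i, f i :=
  sum_filter_of_ne fun i _ hi => (hr i).lt_of_ne' fun h0 => hi (hf i h0)

lemma sum_inv_abs_div_mul_sq_le {ι : Type*} [Fintype ι] (d B : ι → ℝ) {M : ℝ}
    (hB : ∀ i, 0 ≤ B i) (hBM : ∀ i, B i ≤ M) :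
    ∑ i, (|d i| / ∑ k, |d k|)⁻¹ * B i ^ 2 * |d i| ^ 2 ≤ M ^ 2 * (∑ i, |d i|) ^ 2 := by
  set S := ∑ k, |d k|
  have hterm : ∀ i, (|d i| / S)⁻¹ * B i ^ 2 * |d i| ^ 2 = S * B i ^ 2 * |d i| := fun i => by
    rcases eq_or_ne |d i| 0 with h | h
    · simp [h]
    · rw [inv_div]; field_simp
  calc ∑ i, (|d i| / S)⁻¹ * B i ^ 2 * |d i| ^ 2
      = ∑ i, S * B i ^ 2 * |d i| := sum_congr rfl fun i _ => hterm i
    _ ≤ ∑ i, S * M ^ 2 * |d i| := by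
      gcongr with i
      exacts [hB i, hBM i]
    _ = M ^ 2 * S ^ 2 := by rw [← mul_sum]; ring

lemma abs_le_iSup_iSup_abs {ι κ : Type*} [Finite ι] [Finite κ] (A : ι → κ → ℝ)
    (i : ι) (j : κ) :
    |A i j| ≤ ⨆ i, ⨆ j, |A i j| :=
  (Finite.le_ciSup (fun l => |A i l|) j).trans (Finite.le_ciSup (fun k => ⨆ l, |A k l|) i)

/-- **"Sampling from the difference" oracle for matrix games is variable
`‖A‖_max`-Lipschitz in the `ℓ1/ℓ∞` setup.**  With `r_i = |u^y_i - v^y_i| / ‖u^y - v^y‖₁`,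
`c_j = |u^x_j - v^x_j| / ‖u^x - v^x‖₁`, `Pr{ξ = (i,j)} = r_i c_j` and
`F_{(i,j)}(x,y) = ((1/r_i) A_{i:} y_i, -(1/c_j) A_{:j} x_j)`, one has
`E ‖F_ξ(u) - F_ξ(v)‖_*² = Σ_{i : r_i > 0} (1/r_i) ‖A_{i:}‖_∞² |u^y_i - v^y_i|²
+ Σ_{j : c_j > 0} (1/c_j) ‖A_{:j}‖_∞² |u^x_j - v^x_j|² ≤ ‖A‖_max² ‖u - v‖²`,
where `‖(a,b)‖_*² = ‖a‖_∞² + ‖b‖_∞²` and `‖(x,y)‖² = ‖x‖₁² + ‖y‖₁²`. -/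
theorem stmt_14 (m n : ℕ) (A : Matrix (Fin m) (Fin n) ℝ)
    (Amax : ℝ) (hAmax : Amax = ⨆ i, ⨆ j, |A i j|)
    (ux vx : Fin n → ℝ) (uy vy : Fin m → ℝ)
    (hux : ux ≠ vx) (huy : uy ≠ vy)
    (r : Fin m → ℝ) (c : Fin n → ℝ)
    (hr : ∀ i, r i = |uy i - vy i| / ∑ i', |uy i' - vy i'|)
    (hc : ∀ j, c j = |ux j - vx j| / ∑ j', |ux j' - vx j'|) :
    (∑ i, ∑ j, (r i * c j) *
        ((⨆ l, |(r i)⁻¹ * A i l * (uy i - vy i)|) ^ 2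
          + (⨆ l, |(c j)⁻¹ * A l j * (ux j - vx j)|) ^ 2)
      = (∑ i ∈ univ.filter (fun i => 0 < r i),
            (r i)⁻¹ * (⨆ l, |A i l|) ^ 2 * |uy i - vy i| ^ 2)
        + (∑ j ∈ univ.filter (fun j => 0 < c j),
            (c j)⁻¹ * (⨆ l, |A l j|) ^ 2 * |ux j - vx j| ^ 2)) ∧
    ((∑ i ∈ univ.filter (fun i => 0 < r i),
          (r i)⁻¹ * (⨆ l, |A i l|) ^ 2 * |uy i - vy i| ^ 2)
        + (∑ j ∈ univ.filter (fun j => 0 < c j),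
            (c j)⁻¹ * (⨆ l, |A l j|) ^ 2 * |ux j - vx j| ^ 2)
      ≤ Amax ^ 2 * ((∑ j, |ux j - vx j|) ^ 2 + (∑ i, |uy i - vy i|) ^ 2)) := by
  subst hAmax
  have hr0 : ∀ i, 0 ≤ r i := fun i => by rw [hr]; positivity
  have hc0 : ∀ j, 0 ≤ c j := fun j => by rw [hc]; positivity
  rw [sum_filter_pos_eq_sum hr0 fun i h => by simp [h],
    sum_filter_pos_eq_sum hc0 fun j h => by simp [h]]
  constructor
  · have hr1 : ∑ i, r i = 1 := by
      simpa only [hr, Pi.sub_apply] using sum_abs_div_sum_abs (sub_ne_zero.mpr huy)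
    have hc1 : ∑ j, c j = 1 := by
      simpa only [hc, Pi.sub_apply] using sum_abs_div_sum_abs (sub_ne_zero.mpr hux)
    rw [sum_sum_mul_mul_add r c _ _ hr1 hc1]
    simp only [mul_iSup_abs_inv_mul_mul_sq (hr0 _), mul_iSup_abs_inv_mul_mul_sq (hc0 _)]
  · have hmax0 : 0 ≤ ⨆ i, ⨆ j, |A i j| :=
      Real.iSup_nonneg fun i => Real.iSup_nonneg fun j => abs_nonneg _
    have hrow := sum_inv_abs_div_mul_sq_le (fun i => uy i - vy i) (fun i => ⨆ l, |A i l|)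
      (fun i => Real.iSup_nonneg fun l => abs_nonneg _)
      (fun i => Real.iSup_le (fun l => abs_le_iSup_iSup_abs A i l) hmax0)
    have hcol := sum_inv_abs_div_mul_sq_le (fun j => ux j - vx j) (fun j => ⨆ l, |A l j|)
      (fun j => Real.iSup_nonneg fun l => abs_nonneg _)
      (fun j => Real.iSup_le (fun l => abs_le_iSup_iSup_abs A l j) hmax0)
    simp only [← hr, ← hc] at hrow hcol
    linarith
end
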